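/- Let u ∈ W^{1,p}(ℝ^d) with 1 ≤ p ≤ ∞. Then there exists a set E of Lebesgue measure zero such that |u(x) − u(y)| ≤ c·|x − y|·( M_{|∇u|}(x) + M_{|∇u|}(y) ) for all x, y ∈ ℝ^d \ E, where M_f denotes the Hardy–Littlewood maximal function of f and c = c(d) > 0. -/

import Mathlib

open MeasureTheory Metric Set Filter Topology Module
open scoped ENNReal

/-!
Along the segment from `x` to `z`, `|u z - u x| ≤ |z - x| ∫₀¹ |∇u (x + t (z - x))| dt`.
Averaging over `z ∈ B(x, r)` and noting that the homothety of centre `x` and ratio `t` carries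
averages over `B(x, r)` to averages over `B(x, t r)`, the mean oscillation
`⨍_{B(x,r)} |u z - u x| dz` is at most `r M(x)`, where `M` is the maximal function of `|∇u|`.
Integrating `|u x - u y| ≤ |u z - u x| + |u z - u y|` over `z ∈ B(x, |x - y|) ⊆ B(y, 2|x - y|)`
then gives the estimate with `c = 2^(d+1)`.

The exceptional set is where `M` is infinite. It is null because `|∇u| ∈ Lᵖ`: on small balls
its averages are controlled by the Lebesgue differentiation theorem, on large balls by Hölder's
inequality.
-/

section Calculus

variable {F : Type*} [NormedAddCommGroup F] [NormedSpace ℝ F] [CompleteSpace F]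

theorem enorm_sub_le_setLIntegral_enorm_deriv {g : ℝ → F} {a b : ℝ} (hab : a ≤ b)
    (hg : ∀ t ∈ Icc a b, DifferentiableAt ℝ g t) :
    ‖g b - g a‖ₑ ≤ ∫⁻ t in Icc a b, ‖deriv g t‖ₑ := by
  by_cases hfin : ∫⁻ t in Icc a b, ‖deriv g t‖ₑ = ∞
  · simp [hfin]
  have hint : IntervalIntegrable (deriv g) volume a b :=
    (intervalIntegrable_iff_integrableOn_Icc_of_le hab).2
      ⟨(stronglyMeasurable_deriv g).aestronglyMeasurable, lt_top_iff_ne_top.2 hfin⟩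
  rw [← intervalIntegral.integral_deriv_eq_sub (fun t ht => hg t (uIcc_of_le hab ▸ ht)) hint,
    intervalIntegral.integral_of_le hab]
  exact (enorm_integral_le_lintegral_enorm _).trans (lintegral_mono_set Ioc_subset_Icc_self)

variable {E : Type*} [NormedAddCommGroup E] [NormedSpace ℝ E]

theorem enorm_sub_le_setLIntegral_enorm_fderiv_lineMap {u : E → F} (hu : Differentiable ℝ u)
    (x z : E) :
    ‖u z - u x‖ₑ ≤ ∫⁻ t in Icc (0 : ℝ) 1, ‖fderiv ℝ u (AffineMap.lineMap x z t)‖ₑ * ‖z - x‖ₑ := by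
  have hderiv : ∀ t : ℝ, HasDerivAt (fun s => u (AffineMap.lineMap x z s))
      (fderiv ℝ u (AffineMap.lineMap x z t) (z - x)) t := fun t =>
    (hu _).hasFDerivAt.comp_hasDerivAt t AffineMap.hasDerivAt_lineMap
  calc ‖u z - u x‖ₑ
      = ‖u (AffineMap.lineMap x z (1 : ℝ)) - u (AffineMap.lineMap x z (0 : ℝ))‖ₑ := by simp
    _ ≤ ∫⁻ t in Icc (0 : ℝ) 1, ‖deriv (fun s => u (AffineMap.lineMap x z s)) t‖ₑ :=
      enorm_sub_le_setLIntegral_enorm_deriv zero_le_one fun t _ => (hderiv t).differentiableAt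
    _ ≤ _ := lintegral_mono fun t => (hderiv t).deriv ▸ ContinuousLinearMap.le_opENorm _ _

theorem preimage_homothety_ball (x : E) {t : ℝ} (ht : 0 < t) (r : ℝ) :
    AffineMap.homothety x t ⁻¹' ball x (t * r) = ball x r := by
  ext z
  simp [AffineMap.homothety_apply, dist_eq_norm, norm_smul, abs_of_pos ht, ht]

end Calculus

section ChangeOfVariables

variable {α β : Type*} [MeasurableSpace α] [MeasurableSpace β] {μ : Measure α} {ν : Measure β}

theorem setLAverage_preimage_comp_of_map_eq_smul {f : α → β} (hf : Measurable f) {c : ℝ≥0∞}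
    (hc₀ : c ≠ 0) (hc : c ≠ ∞) (hμν : μ.map f = c • ν) {s : Set β} (hs : MeasurableSet s)
    {g : β → ℝ≥0∞} (hg : Measurable g) :
    ⨍⁻ a in f ⁻¹' s, g (f a) ∂μ = ⨍⁻ b in s, g b ∂ν := by
  rw [setLAverage_eq, setLAverage_eq, ← setLIntegral_map hs hg hf, ← Measure.map_apply hf hs, hμν,
    Measure.restrict_smul, lintegral_smul_measure, Measure.smul_apply, smul_eq_mul, smul_eq_mul,
    ENNReal.mul_div_mul_left _ _ hc₀ hc]

end ChangeOfVariables

section Homothety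

variable {E : Type*} [NormedAddCommGroup E] [NormedSpace ℝ E] [MeasurableSpace E] [BorelSpace E]
  [FiniteDimensional ℝ E] {μ : Measure E} [μ.IsAddHaarMeasure]

theorem map_homothety_addHaar (x : E) {t : ℝ} (ht : t ≠ 0) :
    μ.map (AffineMap.homothety x t) = ENNReal.ofReal |t ^ finrank ℝ E|⁻¹ • μ := by
  have : (AffineMap.homothety x t : E → E) = (· + x) ∘ (t • ·) ∘ (· - x) := by
    ext z; simp [AffineMap.homothety_apply]
  rw [this, ← Measure.map_map (by fun_prop) (by fun_prop),
    ← Measure.map_map (by fun_prop) (by fun_prop), map_sub_right_eq_self,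
    Measure.map_addHaar_smul μ ht, Measure.map_smul, map_add_right_eq_self,
    abs_inv]

theorem setLAverage_ball_comp_homothety {g : E → ℝ≥0∞} (hg : Measurable g) (x : E) {t : ℝ}
    (ht : 0 < t) (r : ℝ) :
    ⨍⁻ z in ball x r, g (AffineMap.homothety x t z) ∂μ = ⨍⁻ z in ball x (t * r), g z ∂μ := by
  rw [← preimage_homothety_ball x ht r]
  exact setLAverage_preimage_comp_of_map_eq_smul (AffineMap.homothety_continuous x t).measurable
    (by simp [ht.ne']) ENNReal.ofReal_ne_top (map_homothety_addHaar x ht.ne') measurableSet_ball hg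

variable {F : Type*} [NormedAddCommGroup F] [NormedSpace ℝ F] [CompleteSpace F]

theorem setLAverage_enorm_sub_le_of_setLAverage_enorm_fderiv_le {u : E → F}
    (hu : Differentiable ℝ u) {x : E} {C : ℝ≥0∞}
    (hC : ∀ ρ, ⨍⁻ z in ball x ρ, ‖fderiv ℝ u z‖ₑ ∂μ ≤ C) (r : ℝ) :
    ⨍⁻ z in ball x r, ‖u z - u x‖ₑ ∂μ ≤ ENNReal.ofReal r * C := by
  set g : E → ℝ≥0∞ := fun z => ‖fderiv ℝ u z‖ₑ
  have hg : Measurable g := (measurable_fderiv ℝ u).enorm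
  have hseg : ∀ z ∈ ball x r, ‖u z - u x‖ₑ ≤
      ENNReal.ofReal r * ∫⁻ t in Icc (0 : ℝ) 1, g (AffineMap.homothety x t z) := by
    intro z hz
    have hzx : ‖z - x‖ₑ ≤ ENNReal.ofReal r := by
      rw [← ofReal_norm]
      exact ENNReal.ofReal_le_ofReal (mem_ball_iff_norm.1 hz).le
    rw [← lintegral_const_mul' _ _ ENNReal.ofReal_ne_top]
    refine (enorm_sub_le_setLIntegral_enorm_fderiv_lineMap hu x z).trans
      (lintegral_mono fun t => ?_)
    rw [AffineMap.homothety_eq_lineMap, mul_comm]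
    gcongr
  have hscaled : ∀ᵐ t ∂volume.restrict (Icc (0 : ℝ) 1),
      ⨍⁻ z in ball x r, g (AffineMap.homothety x t z) ∂μ ≤ C := by
    filter_upwards [ae_restrict_mem measurableSet_Icc, Measure.restrict_le_self.absolutelyContinuous
      (compl_mem_ae_iff.2 (measure_singleton (0 : ℝ)))] with t ht ht₀
    rw [setLAverage_ball_comp_homothety hg x (ht.1.lt_of_ne (Ne.symm ht₀)) r]
    exact hC _
  have hmeas : Measurable (Function.uncurry fun z (t : ℝ) => g (AffineMap.homothety x t z)) := by
    simp only [Function.uncurry_def, AffineMap.homothety_apply, vsub_eq_sub, vadd_eq_add]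
    exact hg.comp (by fun_prop)
  calc ⨍⁻ z in ball x r, ‖u z - u x‖ₑ ∂μ
      ≤ ⨍⁻ z in ball x r,
          (ENNReal.ofReal r * ∫⁻ t in Icc (0 : ℝ) 1, g (AffineMap.homothety x t z)) ∂μ :=
        laverage_mono_ae (ae_restrict_of_forall_mem measurableSet_ball hseg)
    _ = ENNReal.ofReal r *
          ∫⁻ t in Icc (0 : ℝ) 1, ⨍⁻ z in ball x r, g (AffineMap.homothety x t z) ∂μ := by
        simp_rw [setLAverage_eq']
        rw [lintegral_const_mul' _ _ ENNReal.ofReal_ne_top,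
          lintegral_lintegral_swap hmeas.aemeasurable]
    _ ≤ ENNReal.ofReal r * ∫⁻ _ in Icc (0 : ℝ) 1, C :=
        mul_le_mul_right (lintegral_mono_ae hscaled) _
    _ = ENNReal.ofReal r * C := by simp

end Homothety

section TwoPoint

variable {E : Type*} [NormedAddCommGroup E] [NormedSpace ℝ E] [MeasurableSpace E] [BorelSpace E]
  [FiniteDimensional ℝ E] {μ : Measure E} [μ.IsAddHaarMeasure]
  {F : Type*} [NormedAddCommGroup F]

theorem setLIntegral_ball_le_two_pow_mul_setLAverage (g : E → ℝ≥0∞) {x y : E} {r : ℝ}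
    (hxy : dist x y ≤ r) :
    ∫⁻ z in ball x r, g z ∂μ ≤ 2 ^ finrank ℝ E * μ (ball x r) * ⨍⁻ z in ball y (2 * r), g z ∂μ :=
  calc ∫⁻ z in ball x r, g z ∂μ
      ≤ ∫⁻ z in ball y (2 * r), g z ∂μ :=
        lintegral_mono_set (ball_subset_ball' (by linarith))
    _ = μ (ball y (2 * r)) * ⨍⁻ z in ball y (2 * r), g z ∂μ :=
        (measure_mul_setLAverage _ measure_ball_lt_top.ne).symm
    _ = 2 ^ finrank ℝ E * μ (ball x r) * ⨍⁻ z in ball y (2 * r), g z ∂μ := by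
        rw [Measure.addHaar_ball_mul_of_pos μ y two_pos, Measure.addHaar_ball_center μ x,
          ENNReal.ofReal_pow zero_le_two, ENNReal.ofReal_ofNat]

theorem enorm_sub_le_of_setLAverage_ball_le {u : E → F} (hu : Continuous u) {x y : E}
    {Cx Cy : ℝ≥0∞} (hx : ∀ r, ⨍⁻ z in ball x r, ‖u z - u x‖ₑ ∂μ ≤ ENNReal.ofReal r * Cx)
    (hy : ∀ r, ⨍⁻ z in ball y r, ‖u z - u y‖ₑ ∂μ ≤ ENNReal.ofReal r * Cy) :
    ‖u x - u y‖ₑ ≤ 2 ^ (finrank ℝ E + 1) * ‖x - y‖ₑ * (Cx + Cy) := by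
  rcases eq_or_ne x y with rfl | hxy
  · simp
  set r := ‖x - y‖
  set R := ENNReal.ofReal r
  have hr : 0 < r := norm_sub_pos_iff.2 hxy
  set B := ball x r
  have hB₀ : μ B ≠ 0 := (measure_ball_pos μ x hr).ne'
  have hBtop : μ B ≠ ∞ := measure_ball_lt_top.ne
  have hintx : ∫⁻ z in B, ‖u z - u x‖ₑ ∂μ ≤ μ B * (R * Cx) := by
    rw [← measure_mul_setLAverage _ hBtop]
    exact mul_le_mul_right (hx r) _
  have hinty : ∫⁻ z in B, ‖u z - u y‖ₑ ∂μ ≤ μ B * (2 ^ (finrank ℝ E + 1) * R * Cy) := by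
    refine (setLIntegral_ball_le_two_pow_mul_setLAverage _ (dist_eq_norm x y).le).trans ?_
    calc 2 ^ finrank ℝ E * μ B * ⨍⁻ z in ball y (2 * r), ‖u z - u y‖ₑ ∂μ
        ≤ 2 ^ finrank ℝ E * μ B * (ENNReal.ofReal (2 * r) * Cy) := mul_le_mul_right (hy _) _
      _ = μ B * (2 ^ (finrank ℝ E + 1) * R * Cy) := by
        rw [ENNReal.ofReal_mul zero_le_two, ENNReal.ofReal_ofNat]
        ring
  refine (ENNReal.mul_le_mul_iff_right hB₀ hBtop).1 ?_
  calc μ B * ‖u x - u y‖ₑ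
      = ∫⁻ _ in B, ‖u x - u y‖ₑ ∂μ := by rw [setLIntegral_const, mul_comm]
    _ ≤ ∫⁻ z in B, (‖u z - u x‖ₑ + ‖u z - u y‖ₑ) ∂μ := lintegral_mono fun z => by
        simpa only [edist_eq_enorm_sub] using edist_triangle_left (u x) (u y) (u z)
    _ = ∫⁻ z in B, ‖u z - u x‖ₑ ∂μ + ∫⁻ z in B, ‖u z - u y‖ₑ ∂μ :=
        lintegral_add_left (hu.sub continuous_const).enorm.measurable _
    _ ≤ μ B * (R * Cx) + μ B * (2 ^ (finrank ℝ E + 1) * R * Cy) := add_le_add hintx hinty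
    _ ≤ μ B * (2 ^ (finrank ℝ E + 1) * R * Cx) + μ B * (2 ^ (finrank ℝ E + 1) * R * Cy) := by
        gcongr
        exact le_mul_of_one_le_left' (one_le_pow₀ one_le_two)
    _ = μ B * (2 ^ (finrank ℝ E + 1) * ‖x - y‖ₑ * (Cx + Cy)) := by
        rw [← ofReal_norm]
        ring

end TwoPoint

section Average

variable {X : Type*} [MeasurableSpace X] {μ : Measure X} {F : Type*} [NormedAddCommGroup F]

theorem setLAverage_enorm_le_eLpNorm_div {p : ℝ≥0∞} (hp : 1 ≤ p) {f : X → F}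
    (hf : AEStronglyMeasurable f μ) {s : Set X} (hs₀ : μ s ≠ 0) (hs : μ s ≠ ∞) :
    ⨍⁻ z in s, ‖f z‖ₑ ∂μ ≤ eLpNorm f p μ / μ s ^ p.toReal⁻¹ := by
  have hHolder := eLpNorm_le_eLpNorm_mul_rpow_measure_univ hp hf.restrict (μ := μ.restrict s)
  rw [Measure.restrict_apply_univ, ENNReal.toReal_one, div_one, one_div,
    ENNReal.rpow_sub _ _ hs₀ hs, ENNReal.rpow_one] at hHolder
  calc ⨍⁻ z in s, ‖f z‖ₑ ∂μ
      = eLpNorm f 1 (μ.restrict s) / μ s := by rw [setLAverage_eq, eLpNorm_one_eq_lintegral_enorm]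
    _ ≤ eLpNorm f p (μ.restrict s) * (μ s / μ s ^ p.toReal⁻¹) / μ s := by gcongr
    _ = eLpNorm f p (μ.restrict s) / μ s ^ p.toReal⁻¹ := by
      rw [div_eq_mul_inv, div_eq_mul_inv, div_eq_mul_inv, mul_assoc, mul_right_comm (μ s),
        ENNReal.mul_inv_cancel hs₀ hs, one_mul]
    _ ≤ eLpNorm f p μ / μ s ^ p.toReal⁻¹ := by gcongr; exact Measure.restrict_le_self

theorem average_nonneg {f : X → ℝ} (hf : ∀ x, 0 ≤ f x) : 0 ≤ ⨍ x, f x ∂μ := by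
  rw [average_eq]
  exact smul_nonneg (by positivity) (integral_nonneg hf)

variable [PseudoMetricSpace X]

theorem setLAverage_ball_le_ofReal_iSup_setAverage {f : X → F} {x : X}
    (hf : ∀ r, IntegrableOn f (ball x r) μ) (hfin : ⨆ r, ⨍⁻ z in ball x r, ‖f z‖ₑ ∂μ ≠ ∞) (r : ℝ) :
    ⨍⁻ z in ball x r, ‖f z‖ₑ ∂μ ≤
      ENNReal.ofReal (⨆ ρ : {ρ : ℝ // 0 < ρ}, ⨍ z in ball x ρ, ‖f z‖ ∂μ) := by
  have hav : ∀ ρ, ⨍⁻ z in ball x ρ, ‖f z‖ₑ ∂μ = ENNReal.ofReal (⨍ z in ball x ρ, ‖f z‖ ∂μ) :=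
    fun ρ => by
      rw [ofReal_setAverage (hf ρ).norm (ae_of_all _ fun _ => norm_nonneg _), setLAverage_eq]
      simp_rw [ofReal_norm]
  rcases le_or_gt r 0 with hr | hr
  · simp [ball_eq_empty.2 hr]
  rw [hav]
  refine ENNReal.ofReal_le_ofReal (le_ciSup (f := fun ρ : {ρ : ℝ // 0 < ρ} =>
    ⨍ z in ball x ρ, ‖f z‖ ∂μ) ⟨(⨆ ρ, ⨍⁻ z in ball x ρ, ‖f z‖ₑ ∂μ).toReal, ?_⟩ ⟨r, hr⟩)
  rintro _ ⟨ρ, rfl⟩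
  dsimp only
  rw [← ENNReal.toReal_ofReal (average_nonneg fun _ => norm_nonneg _), ← hav]
  exact ENNReal.toReal_mono hfin (le_iSup (fun ρ => ⨍⁻ z in ball x ρ, ‖f z‖ₑ ∂μ) ρ)

end Average

section Differentiation

variable {E : Type*} [NormedAddCommGroup E] [NormedSpace ℝ E] [MeasurableSpace E] [BorelSpace E]
  [FiniteDimensional ℝ E] {μ : Measure E} [μ.IsAddHaarMeasure] {F : Type*} [NormedAddCommGroup F]

theorem ball_ae_eq_closedBall (x : E) {r : ℝ} (hr : 0 < r) : ball x r =ᵐ[μ] closedBall x r :=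
  ae_eq_of_subset_of_measure_ge ball_subset_closedBall
    (by rw [Measure.addHaar_closedBall μ x hr.le, Measure.addHaar_ball_of_pos μ x hr])
    measurableSet_ball.nullMeasurableSet measure_closedBall_lt_top.ne

theorem ae_tendsto_setLAverage_ball_enorm {f : E → F} (hf : LocallyIntegrable f μ) :
    ∀ᵐ x ∂μ, Tendsto (fun r => ⨍⁻ z in ball x r, ‖f z‖ₑ ∂μ) (𝓝[>] 0) (𝓝 ‖f x‖ₑ) := by
  filter_upwards [IsUnifLocDoublingMeasure.ae_tendsto_average μ (fun y => (hf y).norm) 1] with x hx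
  have hreal := hx (fun _ => x) id tendsto_id <| by
    filter_upwards [self_mem_nhdsWithin] with r (hr : 0 < r)
    rw [one_mul]
    exact mem_closedBall_self hr.le
  rw [← ofReal_norm]
  refine ((ENNReal.continuous_ofReal.tendsto _).comp hreal).congr' ?_
  filter_upwards [self_mem_nhdsWithin] with r (hr : 0 < r)
  rw [Function.comp_apply, id,
    ofReal_setAverage (hf.integrableOn_isCompact (isCompact_closedBall x r)).norm
      (ae_of_all _ fun _ => norm_nonneg _),
    setLAverage_congr (ball_ae_eq_closedBall x hr), setLAverage_eq]
  simp_rw [ofReal_norm]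

theorem ae_iSup_setLAverage_ball_lt_top {p : ℝ≥0∞} (hp : 1 ≤ p) {f : E → F}
    (hf : MemLp f p μ) : ∀ᵐ x ∂μ, ⨆ r, ⨍⁻ z in ball x r, ‖f z‖ₑ ∂μ < ∞ := by
  filter_upwards [ae_tendsto_setLAverage_ball_enorm (hf.locallyIntegrable hp)] with x hx
  obtain ⟨δ, hδ, hsmall⟩ : ∃ δ > 0, ∀ r ∈ Ioo 0 δ, ⨍⁻ z in ball x r, ‖f z‖ₑ ∂μ < ‖f x‖ₑ + 1 :=
    (nhdsGT_basis 0).eventually_iff.1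
      (hx.eventually (gt_mem_nhds (ENNReal.lt_add_right enorm_ne_top one_ne_zero)))
  have hlarge : ∀ r, δ ≤ r →
      ⨍⁻ z in ball x r, ‖f z‖ₑ ∂μ ≤ eLpNorm f p μ / μ (ball x δ) ^ p.toReal⁻¹ := fun r hr =>
    (setLAverage_enorm_le_eLpNorm_div hp hf.1 (measure_ball_pos μ x (hδ.trans_le hr)).ne'
      measure_ball_lt_top.ne).trans
      (ENNReal.div_le_div_left (ENNReal.rpow_le_rpow (measure_mono (ball_subset_ball hr))
        (by positivity)) _)
  refine (iSup_le fun r => ?_ :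
      _ ≤ max (‖f x‖ₑ + 1) (eLpNorm f p μ / μ (ball x δ) ^ p.toReal⁻¹)).trans_lt
    (max_lt (ENNReal.add_lt_top.2 ⟨enorm_lt_top, ENNReal.one_lt_top⟩) (ENNReal.div_lt_top hf.2.ne
      (ENNReal.rpow_pos (measure_ball_pos μ x hδ) measure_ball_lt_top.ne).ne'))
  rcases le_or_gt r 0 with hr | hr
  · simp [ball_eq_empty.2 hr]
  rcases lt_or_ge r δ with hrδ | hrδ
  · exact le_max_of_le_left (hsmall r ⟨hr, hrδ⟩).le
  · exact le_max_of_le_right (hlarge r hrδ)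

end Differentiation

/-- Pointwise Sobolev estimate via the Hardy–Littlewood maximal function: for
`u ∈ W^{1,p}(ℝ^d)` there is a Lebesgue-null set `N` with
`|u x - u y| ≤ c |x - y| (M_{|∇u|}(x) + M_{|∇u|}(y))` off `N`, where
`c = c(d) > 0` and `M_f(x) = sup_{r>0} ⨍_{B(x,r)} |f|`. -/
theorem stmt_16 (d : ℕ) (p : ENNReal) (hp : 1 ≤ p) :
    ∃ c : ℝ, 0 < c ∧
      ∀ u : EuclideanSpace ℝ (Fin d) → ℝ,
        Differentiable ℝ u → MemLp u p volume →
        MemLp (fun x => ‖fderiv ℝ u x‖) p volume →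
        ∀ Mf : EuclideanSpace ℝ (Fin d) → ℝ,
          (∀ x, Mf x = ⨆ r : {r : ℝ // 0 < r},
              ⨍ y in ball x (r : ℝ), ‖fderiv ℝ u y‖ ∂volume) →
          ∃ N : Set (EuclideanSpace ℝ (Fin d)), volume N = 0 ∧
            ∀ x ∉ N, ∀ y ∉ N, |u x - u y| ≤ c * ‖x - y‖ * (Mf x + Mf y) := by
  refine ⟨2 ^ (d + 1), by positivity, fun u hu _ hDu Mf hMf => ?_⟩
  have hDu' : MemLp (fderiv ℝ u) p volume :=
    (memLp_norm_iff (measurable_fderiv ℝ u).aestronglyMeasurable).1 hDu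
  have hMf₀ : ∀ x, 0 ≤ Mf x := fun x =>
    hMf x ▸ Real.iSup_nonneg fun _ => average_nonneg fun _ => norm_nonneg _
  -- off `N` the averages are bounded, so `Mf x` is not the junk value of an unbounded `⨆`
  set N := {x | ⨆ r, ⨍⁻ z in ball x r, ‖fderiv ℝ u z‖ₑ ∂volume = ∞}
  have hpoincare : ∀ x ∉ N, ∀ r, ⨍⁻ z in ball x r, ‖u z - u x‖ₑ ∂volume ≤
      ENNReal.ofReal r * ENNReal.ofReal (Mf x) := fun x hx =>
    setLAverage_enorm_sub_le_of_setLAverage_enorm_fderiv_le hu fun ρ => hMf x ▸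
      setLAverage_ball_le_ofReal_iSup_setAverage (fun r =>
        ((hDu'.locallyIntegrable hp).integrableOn_isCompact (isCompact_closedBall x r)).mono_set
          ball_subset_closedBall) hx ρ
  refine ⟨N, ?_, fun x hx y hy => ?_⟩
  · simpa [N, ae_iff] using ae_iSup_setLAverage_ball_lt_top hp hDu'
  · have h := enorm_sub_le_of_setLAverage_ball_le hu.continuous (hpoincare x hx) (hpoincare y hy)
    have hpow : (2 : ℝ≥0∞) ^ (d + 1) = ENNReal.ofReal (2 ^ (d + 1)) := by
      rw [ENNReal.ofReal_pow zero_le_two, ENNReal.ofReal_ofNat]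
    rw [finrank_euclideanSpace_fin, ← ENNReal.ofReal_add (hMf₀ x) (hMf₀ y), ← ofReal_norm,
      ← ofReal_norm, hpow, ← ENNReal.ofReal_mul (by positivity),
      ← ENNReal.ofReal_mul (by positivity),
      ENNReal.ofReal_le_ofReal_iff (mul_nonneg (by positivity) (add_nonneg (hMf₀ x) (hMf₀ y)))] at h
    rwa [Real.norm_eq_abs] at h
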